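/- arXiv:1812.05442 — 6 statements merged into one kernel-verified Lean document; each statement's English description precedes it below -/
import Mathlib

section
/- Let ι be a finite nonempty type of indices, Bd a nonempty subset of ι (the boundary indices), and S : ι → Finset ι with i ∈ S i for every i (the support neighborhoods). Let u : ι → ℝ and let c : ι → ι → ℝ be a family of weight vectors. Assume: (i) for every i ∉ Bd at which u is a local discrete extremum (i.e. u i ≥ u j for all j ∈ S i, or u i ≤ u j for all j ∈ S i), the weights satisfy c i j ≥ 0 for all j, c i i = 0, c i j = 0 for j ∉ S i, Σ_j c i j = 1, and u i = Σ_j (c i j) · (u j); and (ii) for every nonempty set T ⊆ ι of non-boundary indices on which u is constant and each of whose members is a local discrete extremum, there exists i ∈ T with c i j > 0 for some j ∉ T. Then the global discrete maximum principle holds: for every i ∈ ι, (min of u over Bd) ≤ u i ≤ (max of u over Bd). -/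
/-!
Let `M` be the global maximum (or minimum) of `u` and `T` the set where `u = M`. If `T` missed the
boundary, every point of `T` would be a non-boundary local extremum, so `u` would be a convex
combination of neighbouring values there; a convex combination equal to an extreme value puts
positive weight only on points where that value is attained, so no positive weight could leave
`T`, contradicting the connectivity hypothesis. Hence `M` is attained on the boundary.
-/

open Finset

section WeightedSum

variable {ι R : Type*} [CommRing R] [LinearOrder R] [IsStrictOrderedRing R]
  {s : Finset ι} {w f : ι → R} {M : R} {j : ι}

theorem eq_of_weighted_sum_eq_of_le (hw : ∀ k ∈ s, 0 ≤ w k) (hsum : ∑ k ∈ s, w k = 1)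
    (hf : ∀ k ∈ s, f k ≤ M) (heq : ∑ k ∈ s, w k * f k = M) (hj : j ∈ s) (hwj : 0 < w j) :
    f j = M := by
  have hgap : ∑ k ∈ s, w k * (M - f k) = 0 := by
    simp only [mul_sub, sum_sub_distrib, ← sum_mul, hsum, one_mul, heq, sub_self]
  have hterm := (sum_eq_zero_iff_of_nonneg fun k hk ↦
    mul_nonneg (hw k hk) (sub_nonneg.mpr (hf k hk))).mp hgap j hj
  rcases mul_eq_zero.mp hterm with h | h
  · exact absurd h hwj.ne'
  · exact (sub_eq_zero.mp h).symm

theorem eq_of_weighted_sum_eq_of_ge (hw : ∀ k ∈ s, 0 ≤ w k) (hsum : ∑ k ∈ s, w k = 1)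
    (hf : ∀ k ∈ s, M ≤ f k) (heq : ∑ k ∈ s, w k * f k = M) (hj : j ∈ s) (hwj : 0 < w j) :
    f j = M := by
  have hneg : ∑ k ∈ s, w k * (-f k) = -M := by simp only [mul_neg, sum_neg_distrib, heq]
  exact neg_inj.mp <| eq_of_weighted_sum_eq_of_le (f := fun k ↦ -f k) hw hsum
    (fun k hk ↦ neg_le_neg (hf k hk)) hneg hj hwj

end WeightedSum

theorem exists_mem_boundary_eq_of_isExtreme {ι : Type*} [Fintype ι]
    {Bd : Set ι} {S : ι → Finset ι} {u : ι → ℝ} {c : ι → ι → ℝ}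
    (hconv : ∀ i, i ∉ Bd →
      ((∀ j ∈ S i, u j ≤ u i) ∨ (∀ j ∈ S i, u i ≤ u j)) →
      (∀ j, 0 ≤ c i j) ∧ c i i = 0 ∧ (∀ j, j ∉ S i → c i j = 0) ∧
      (∑ j, c i j) = 1 ∧ u i = ∑ j, c i j * u j)
    (hconn : ∀ T : Set ι, T.Nonempty → (∀ i ∈ T, i ∉ Bd) →
      (∀ i ∈ T, ∀ j ∈ T, u i = u j) →
      (∀ i ∈ T, (∀ j ∈ S i, u j ≤ u i) ∨ (∀ j ∈ S i, u i ≤ u j)) →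
      ∃ i ∈ T, ∃ j, j ∉ T ∧ 0 < c i j)
    {m : ι} (hm : (∀ j, u j ≤ u m) ∨ (∀ j, u m ≤ u j)) :
    ∃ b ∈ Bd, u b = u m := by
  by_contra! hBd
  set T : Set ι := {i | u i = u m}
  have hTBd : ∀ i ∈ T, i ∉ Bd := fun i hi hiBd ↦ hBd i hiBd hi
  have hText : ∀ i ∈ T, (∀ j ∈ S i, u j ≤ u i) ∨ (∀ j ∈ S i, u i ≤ u j) := by
    intro i (hi : u i = u m)
    rw [hi]
    exact hm.imp (fun h j _ ↦ h j) (fun h j _ ↦ h j)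
  obtain ⟨i, hi, j, hjT, hcij⟩ :=
    hconn T ⟨m, rfl⟩ hTBd (fun i hi k hk ↦ hi.trans hk.symm) hText
  obtain ⟨hc, -, -, hsum, hui⟩ := hconv i (hTBd i hi) (hText i hi)
  have heq : ∑ k, c i k * u k = u m := hui.symm.trans hi
  apply hjT
  rcases hm with hmax | hmin
  · exact eq_of_weighted_sum_eq_of_le (fun k _ ↦ hc k) hsum (fun k _ ↦ hmax k) heq
      (mem_univ j) hcij
  · exact eq_of_weighted_sum_eq_of_ge (fun k _ ↦ hc k) hsum (fun k _ ↦ hmin k) heq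
      (mem_univ j) hcij

theorem global_discrete_maximum_principle_general
    {ι : Type*} [Fintype ι]
    (Bd : Set ι)
    (S : ι → Finset ι)
    (u : ι → ℝ) (c : ι → ι → ℝ)
    (hconv : ∀ i, i ∉ Bd →
      ((∀ j ∈ S i, u j ≤ u i) ∨ (∀ j ∈ S i, u i ≤ u j)) →
      (∀ j, 0 ≤ c i j) ∧ c i i = 0 ∧ (∀ j, j ∉ S i → c i j = 0) ∧
      (∑ j, c i j) = 1 ∧ u i = ∑ j, c i j * u j)
    (hconn : ∀ T : Set ι, T.Nonempty → (∀ i ∈ T, i ∉ Bd) →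
      (∀ i ∈ T, ∀ j ∈ T, u i = u j) →
      (∀ i ∈ T, (∀ j ∈ S i, u j ≤ u i) ∨ (∀ j ∈ S i, u i ≤ u j)) →
      ∃ i ∈ T, ∃ j, j ∉ T ∧ 0 < c i j) :
    ∀ i, sInf (u '' Bd) ≤ u i ∧ u i ≤ sSup (u '' Bd) := by
  intro i
  have : Nonempty ι := ⟨i⟩
  obtain ⟨m, hm⟩ := Finite.exists_max u
  obtain ⟨n, hn⟩ := Finite.exists_min u
  obtain ⟨bmax, hbmax, hubmax⟩ := exists_mem_boundary_eq_of_isExtreme hconv hconn (.inl hm)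
  obtain ⟨bmin, hbmin, hubmin⟩ := exists_mem_boundary_eq_of_isExtreme hconv hconn (.inr hn)
  have hfin : (u '' Bd).Finite := Bd.toFinite.image u
  constructor
  · calc sInf (u '' Bd) ≤ u bmin := csInf_le hfin.bddBelow ⟨bmin, hbmin, rfl⟩
      _ = u n := hubmin
      _ ≤ u i := hn i
  · calc u i ≤ u m := hm i
      _ = u bmax := hubmax.symm
      _ ≤ sSup (u '' Bd) := le_csSup hfin.bddAbove ⟨bmax, hbmax, rfl⟩

/-- Global discrete maximum principle (algebraic core of Theorem 3.2).
If at every non-boundary local discrete extremum the value is a convex combination of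
its neighbor values, and every constant set of non-boundary extrema has a positive
weight leading outside, then every value is bounded by the boundary data. -/
theorem global_discrete_maximum_principle
    {ι : Type*} [Fintype ι] [Nonempty ι]
    (Bd : Set ι) (hBd : Bd.Nonempty)
    (S : ι → Finset ι) (hS : ∀ i, i ∈ S i)
    (u : ι → ℝ) (c : ι → ι → ℝ)
    (hconv : ∀ i, i ∉ Bd →
      ((∀ j ∈ S i, u j ≤ u i) ∨ (∀ j ∈ S i, u i ≤ u j)) →
      (∀ j, 0 ≤ c i j) ∧ c i i = 0 ∧ (∀ j, j ∉ S i → c i j = 0) ∧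
      (∑ j, c i j) = 1 ∧ u i = ∑ j, c i j * u j)
    (hconn : ∀ T : Set ι, T.Nonempty → (∀ i ∈ T, i ∉ Bd) →
      (∀ i ∈ T, ∀ j ∈ T, u i = u j) →
      (∀ i ∈ T, (∀ j ∈ S i, u j ≤ u i) ∨ (∀ j ∈ S i, u i ≤ u j)) →
      ∃ i ∈ T, ∃ j, j ∉ T ∧ 0 < c i j) :
    ∀ i, sInf (u '' Bd) ≤ u i ∧ u i ≤ sSup (u '' Bd) :=
  global_discrete_maximum_principle_general Bd S u c hconv hconn
end

section
/- For a fixed index i, consider real numbers u_i, finite nonempty families (u_j), (u_j^sym) of neighbor values, and positive distances r_j > 0 and ρ_j > 0. Define the jump [[∇u]]_ij := (u_j − u_i)/r_j + (u_j^sym − u_i)/ρ_j and twice the mean 2{{|∇u|}}_ij := |u_j − u_i|/r_j + |u_j^sym − u_i|/ρ_j. Assume the denominator D := Σ_j 2{{|∇u|}}_ij is nonzero, and set R := |Σ_j [[∇u]]_ij| / D. Then 0 ≤ R ≤ 1, and R = 1 if and only if u_i is a local discrete extremum, i.e. (u_j ≤ u_i and u_j^sym ≤ u_i for all j) or (u_j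 ≥ u_i and u_j^sym ≥ u_i for all j). -/
/-!
Write `a j := (u j - ui) / r j` and `b j := (usym j - ui) / ρ j`, so that the numerator of `R` is
`|∑ (a j + b j)|` and its denominator is `∑ (|a j| + |b j|)`. The triangle inequality gives
`R ≤ 1`. Equality means that the sum equals `±` the sum of absolute values, i.e. that the
nonnegative terms `|a j| ∓ a j` and `|b j| ∓ b j` all vanish: every `a j`, `b j` has the same
sign, which, the distances being positive, is the sign of every `u j - ui` and `usym j - ui`.
-/

namespace Finset

variable {ι G : Type*} [AddCommGroup G] [LinearOrder G] [IsOrderedAddMonoid G]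
  (s : Finset ι) (a b : ι → G)

theorem abs_sum_add_le_sum_abs_add_abs :
    |∑ j ∈ s, (a j + b j)| ≤ ∑ j ∈ s, (|a j| + |b j|) :=
  (abs_sum_le_sum_abs _ s).trans (sum_le_sum fun _ _ => abs_add_le _ _)

theorem sum_add_eq_sum_abs_add_abs_iff :
    ∑ j ∈ s, (a j + b j) = ∑ j ∈ s, (|a j| + |b j|) ↔ ∀ j ∈ s, 0 ≤ a j ∧ 0 ≤ b j := by
  have hgap : ∀ j, (|a j| + |b j|) - (a j + b j) = (|a j| - a j) + (|b j| - b j) :=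
    fun j => by abel
  rw [eq_comm, ← sub_eq_zero, ← sum_sub_distrib, sum_eq_zero_iff_of_nonneg fun j _ => by
    rw [hgap]; exact add_nonneg (sub_nonneg.2 (le_abs_self _)) (sub_nonneg.2 (le_abs_self _))]
  refine forall₂_congr fun j _ => ?_
  rw [hgap, add_eq_zero_iff_of_nonneg (sub_nonneg.2 (le_abs_self _))
    (sub_nonneg.2 (le_abs_self _)), sub_eq_zero, sub_eq_zero, abs_eq_self, abs_eq_self]

theorem abs_sum_add_eq_sum_abs_add_abs_iff :
    |∑ j ∈ s, (a j + b j)| = ∑ j ∈ s, (|a j| + |b j|) ↔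
      (∀ j ∈ s, 0 ≤ a j ∧ 0 ≤ b j) ∨ (∀ j ∈ s, a j ≤ 0 ∧ b j ≤ 0) := by
  have hneg := sum_add_eq_sum_abs_add_abs_iff s (-a) (-b)
  simp only [Pi.neg_apply, abs_neg, ← neg_add, sum_neg_distrib, neg_nonneg] at hneg
  rw [abs_eq (sum_nonneg fun _ _ => add_nonneg (abs_nonneg _) (abs_nonneg _)),
    sum_add_eq_sum_abs_add_abs_iff, ← hneg, neg_eq_iff_eq_neg]

end Finset

theorem shock_detector_ratio_bounds_general
    {ι : Type*} (s : Finset ι)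
    (ui : ℝ) (u usym : ι → ℝ) (r ρ : ι → ℝ)
    (hr : ∀ j ∈ s, 0 < r j) (hρ : ∀ j ∈ s, 0 < ρ j)
    (D : ℝ)
    (hD : D = ∑ j ∈ s, (|u j - ui| / r j + |usym j - ui| / ρ j))
    (hD0 : D ≠ 0)
    (R : ℝ)
    (hR : R = |∑ j ∈ s, ((u j - ui) / r j + (usym j - ui) / ρ j)| / D) :
    0 ≤ R ∧ R ≤ 1 ∧
    (R = 1 ↔
      ((∀ j ∈ s, u j ≤ ui ∧ usym j ≤ ui) ∨ (∀ j ∈ s, ui ≤ u j ∧ ui ≤ usym j))) := by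
  have hD_abs : D = ∑ j ∈ s, (|(u j - ui) / r j| + |(usym j - ui) / ρ j|) :=
    hD.trans <| Finset.sum_congr rfl fun j hj => by
      rw [abs_div, abs_div, abs_of_pos (hr j hj), abs_of_pos (hρ j hj)]
  have hnonneg : ∀ {x y c : ℝ}, 0 < c → (0 ≤ (x - y) / c ↔ y ≤ x) := fun hc => by
    rw [le_div_iff₀ hc, zero_mul, sub_nonneg]
  have hnonpos : ∀ {x y c : ℝ}, 0 < c → ((x - y) / c ≤ 0 ↔ x ≤ y) := fun hc => by
    rw [div_le_iff₀ hc, zero_mul, sub_nonpos]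
  have hD_nonneg : 0 ≤ D := hD_abs ▸ Finset.sum_nonneg fun _ _ => by positivity
  subst hR
  refine ⟨by positivity, div_le_one_of_le₀ (hD_abs ▸ Finset.abs_sum_add_le_sum_abs_add_abs ..)
    hD_nonneg, ?_⟩
  rw [div_eq_one_iff_eq hD0, hD_abs, Finset.abs_sum_add_eq_sum_abs_add_abs_iff, or_comm]
  refine or_congr (forall₂_congr fun j hj => ?_) (forall₂_congr fun j hj => ?_)
  · rw [hnonpos (hr j hj), hnonpos (hρ j hj)]
  · rw [hnonneg (hr j hj), hnonneg (hρ j hj)]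

/-- the shock-detector ratio `R = |Σ jumps| / Σ (2 means)` lies in `[0,1]`
and equals 1 exactly when `u i` is a local discrete extremum. -/
theorem shock_detector_ratio_bounds
    {ι : Type*} (s : Finset ι) (hs : s.Nonempty)
    (ui : ℝ) (u usym : ι → ℝ) (r ρ : ι → ℝ)
    (hr : ∀ j ∈ s, 0 < r j) (hρ : ∀ j ∈ s, 0 < ρ j)
    (D : ℝ)
    (hD : D = ∑ j ∈ s, (|u j - ui| / r j + |usym j - ui| / ρ j))
    (hD0 : D ≠ 0)
    (R : ℝ)
    (hR : R = |∑ j ∈ s, ((u j - ui) / r j + (usym j - ui) / ρ j)| / D) :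
    0 ≤ R ∧ R ≤ 1 ∧
    (R = 1 ↔
      ((∀ j ∈ s, u j ≤ ui ∧ usym j ≤ ui) ∨ (∀ j ∈ s, ui ≤ u j ∧ ui ≤ usym j))) :=
  shock_detector_ratio_bounds_general s ui u usym r ρ hr hρ D hD hD0 R hR
end

section
/- For a fixed index i, consider real numbers u_i, finite nonempty families (u_j), (u_j^sym), and positive distances r_j > 0, ρ_j > 0, with jump [[∇u]]_ij := (u_j − u_i)/r_j + (u_j^sym − u_i)/ρ_j and twice the mean 2{{|∇u|}}_ij := |u_j − u_i|/r_j + |u_j^sym − u_i|/ρ_j. Suppose u_i is NOT a local discrete extremum, i.e. there exists an index with value strictly greater than u_i and an index with value strictly less than u_i among the u_j and u_j^sym. Then D := Σ_j 2{{|∇u|}}_ij > 0, the ratio R := |Σ_j [[∇u]]_ij| / D satisfies R < 1, and consequently the detector value R^q tends to 0 as the exponent q → ∞. -/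
/-!
Write the jump as `N = ∑ⱼ (xⱼ + yⱼ)` with `xⱼ = (uⱼ - uᵢ)/rⱼ`, `yⱼ = (uⱼˢʸᵐ - uᵢ)/ρⱼ`; since the
distances are positive, `D = ∑ⱼ (|xⱼ| + |yⱼ|)`. The triangle inequality `|N| ≤ D` is strict as
soon as the terms do not all have the same sign, which is exactly the non-extremality of `uᵢ`.
Hence `0 ≤ |N| < D`, so `R = |N| / D ∈ [0, 1)` and `R ^ q → 0`.
-/

open Finset

lemma add_lt_abs_add_abs_of_neg_or_neg {x y : ℝ} (h : x < 0 ∨ y < 0) : x + y < |x| + |y| := by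
  rcases h with hx | hy
  · linarith [abs_of_neg hx, le_abs_self y]
  · linarith [abs_of_neg hy, le_abs_self x]

section SumAbs

variable {ι : Type*} {s : Finset ι} {x y : ι → ℝ}

lemma sum_add_lt_sum_abs_add_abs (hneg : ∃ j ∈ s, x j < 0 ∨ y j < 0) :
    ∑ j ∈ s, (x j + y j) < ∑ j ∈ s, (|x j| + |y j|) :=
  sum_lt_sum (fun _ _ => add_le_add (le_abs_self _) (le_abs_self _))
    (hneg.imp fun _ ⟨hj, h⟩ => ⟨hj, add_lt_abs_add_abs_of_neg_or_neg h⟩)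

lemma abs_sum_add_lt_sum_abs_add_abs (hpos : ∃ j ∈ s, 0 < x j ∨ 0 < y j)
    (hneg : ∃ j ∈ s, x j < 0 ∨ y j < 0) :
    |∑ j ∈ s, (x j + y j)| < ∑ j ∈ s, (|x j| + |y j|) := by
  have hneg' : ∃ j ∈ s, -x j < 0 ∨ -y j < 0 := by simpa only [neg_lt_zero] using hpos
  have hlt := sum_add_lt_sum_abs_add_abs hneg'
  simp only [abs_neg, ← neg_add, sum_neg_distrib] at hlt
  exact abs_lt.2 ⟨by linarith, sum_add_lt_sum_abs_add_abs hneg⟩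

end SumAbs

theorem shock_detector_vanishes_at_non_extrema_general
    {ι : Type*} (s : Finset ι)
    (ui : ℝ) (u usym : ι → ℝ) (r ρ : ι → ℝ)
    (hr : ∀ j ∈ s, 0 < r j) (hρ : ∀ j ∈ s, 0 < ρ j)
    (habove : ∃ j ∈ s, ui < u j ∨ ui < usym j)
    (hbelow : ∃ j ∈ s, u j < ui ∨ usym j < ui)
    (D : ℝ)
    (hD : D = ∑ j ∈ s, (|u j - ui| / r j + |usym j - ui| / ρ j))
    (R : ℝ)
    (hR : R = |∑ j ∈ s, ((u j - ui) / r j + (usym j - ui) / ρ j)| / D) :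
    0 < D ∧ R < 1 ∧
    Filter.Tendsto (fun q : ℕ => R ^ q) Filter.atTop (nhds 0) := by
  have hD' : D = ∑ j ∈ s, (|(u j - ui) / r j| + |(usym j - ui) / ρ j|) := by
    rw [hD]
    refine sum_congr rfl fun j hj => ?_
    rw [abs_div, abs_div, abs_of_pos (hr j hj), abs_of_pos (hρ j hj)]
  have hpos : ∃ j ∈ s, 0 < (u j - ui) / r j ∨ 0 < (usym j - ui) / ρ j := by
    obtain ⟨j, hj, h⟩ := habove
    refine ⟨j, hj, h.imp (fun h => div_pos ?_ (hr j hj)) (fun h => div_pos ?_ (hρ j hj))⟩ <;>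
      linarith
  have hneg : ∃ j ∈ s, (u j - ui) / r j < 0 ∨ (usym j - ui) / ρ j < 0 := by
    obtain ⟨j, hj, h⟩ := hbelow
    refine ⟨j, hj, h.imp (fun h => div_neg_of_neg_of_pos ?_ (hr j hj))
      (fun h => div_neg_of_neg_of_pos ?_ (hρ j hj))⟩ <;> linarith
  have hlt := abs_sum_add_lt_sum_abs_add_abs hpos hneg
  rw [← hD'] at hlt
  have hDpos : 0 < D := (abs_nonneg _).trans_lt hlt
  have hR1 : R < 1 := hR ▸ (div_lt_one hDpos).2 hlt
  have hR0 : 0 ≤ R := hR ▸ by positivity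
  exact ⟨hDpos, hR1, tendsto_pow_atTop_nhds_zero_of_lt_one hR0 hR1⟩

/-- at a point that is not a local discrete extremum the denominator is
positive, the shock-detector ratio is strictly below 1, and hence the detector value
`R ^ q` tends to 0 as the exponent `q → ∞` (mechanism of Theorem 3.3). -/
theorem shock_detector_vanishes_at_non_extrema
    {ι : Type*} (s : Finset ι) (hs : s.Nonempty)
    (ui : ℝ) (u usym : ι → ℝ) (r ρ : ι → ℝ)
    (hr : ∀ j ∈ s, 0 < r j) (hρ : ∀ j ∈ s, 0 < ρ j)
    (habove : ∃ j ∈ s, ui < u j ∨ ui < usym j)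
    (hbelow : ∃ j ∈ s, u j < ui ∨ usym j < ui)
    (D : ℝ)
    (hD : D = ∑ j ∈ s, (|u j - ui| / r j + |usym j - ui| / ρ j))
    (R : ℝ)
    (hR : R = |∑ j ∈ s, ((u j - ui) / r j + (usym j - ui) / ρ j)| / D) :
    0 < D ∧ R < 1 ∧
    Filter.Tendsto (fun q : ℕ => R ^ q) Filter.atTop (nhds 0) :=
  shock_detector_vanishes_at_non_extrema_general s ui u usym r ρ hr hρ habove hbelow D hD R hR
end

section
/- Let E be a real normed vector space, g : E → ℝ a continuous linear map, and cst ∈ ℝ; let f : E → ℝ be the affine function f x = g x + cst. Let x_i, x_j ∈ E with x_j ≠ x_i, let τ > 0, and let x^sym := x_i − τ • (x_j − x_i) (the symmetric point lying on the opposite ray from x_i through x_j). Then the jump of the linear gradient approximation vanishes: (f x_j − f x_i)/‖x_j − x_i‖ + (f x^sym − f x_i)/‖x^sym − x_i‖ = 0. -/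
/-! Increments of an affine function are values of its linear part `g`, and the difference
quotient `g r / ‖r‖` is unchanged by stretching `r` and changes sign when `r` is reversed. -/

theorem LinearMap.apply_neg_smul_div_norm {E : Type*} [NormedAddCommGroup E] [NormedSpace ℝ E]
    (g : E →ₗ[ℝ] ℝ) (v : E) {τ : ℝ} (hτ : 0 < τ) :
    g (-(τ • v)) / ‖-(τ • v)‖ = -(g v / ‖v‖) := by
  rw [map_neg, map_smul, norm_neg, norm_smul, Real.norm_of_nonneg hτ.le, smul_eq_mul,
    neg_div, mul_div_mul_left _ _ hτ.ne']

theorem affine_gradient_jump_vanishes_general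
    {E : Type*} [NormedAddCommGroup E] [NormedSpace ℝ E]
    (g : E →L[ℝ] ℝ) (cst : ℝ) (f : E → ℝ) (hf : ∀ x, f x = g x + cst)
    (xi xj : E)
    (τ : ℝ) (hτ : 0 < τ)
    (xsym : E) (hxsym : xsym = xi - τ • (xj - xi)) :
    (f xj - f xi) / ‖xj - xi‖ + (f xsym - f xi) / ‖xsym - xi‖ = 0 := by
  have hincr : ∀ y, f y - f xi = (g : E →ₗ[ℝ] ℝ) (y - xi) := fun y => by
    simp only [hf, ContinuousLinearMap.coe_coe, map_sub, add_sub_add_right_eq_sub]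
  have hsym : xsym - xi = -(τ • (xj - xi)) := by rw [hxsym, sub_sub_cancel_left]
  rw [hincr, hincr, hsym, LinearMap.apply_neg_smul_div_norm _ _ hτ, add_neg_cancel]

/-- for an affine function the jump of the linear gradient approximation
across `x_i` in the direction of `x_j` (with symmetric point on the opposite ray)
vanishes. -/
theorem affine_gradient_jump_vanishes
    {E : Type*} [NormedAddCommGroup E] [NormedSpace ℝ E]
    (g : E →L[ℝ] ℝ) (cst : ℝ) (f : E → ℝ) (hf : ∀ x, f x = g x + cst)
    (xi xj : E) (hne : xj ≠ xi)
    (τ : ℝ) (hτ : 0 < τ)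
    (xsym : E) (hxsym : xsym = xi - τ • (xj - xi)) :
    (f xj - f xi) / ‖xj - xi‖ + (f xsym - f xi) / ‖xsym - xi‖ = 0 :=
  affine_gradient_jump_vanishes_general g cst f hf xi xj τ hτ xsym hxsym
end

section
/- Let E be a real normed vector space, g : E → ℝ a continuous linear map, cst ∈ ℝ, and f x = g x + cst an affine function. Fix x_i ∈ E and a finite family of points x_j ≠ x_i with symmetric points x_j^sym := x_i − τ_j • (x_j − x_i) where τ_j > 0. Set u_i := f x_i, u_j := f x_j, u_j^sym := f x_j^sym, r_j := ‖x_j − x_i‖, ρ_j := ‖x_j^sym − x_i‖, and define the shock detector α_i := (|Σ_j ((u_j − u_i)/r_j + (u_j^sym − u_i)/ρ_j)| / Σ_j (|u_j − u_i|/r_j + |u_j^sym − u_i|/ρ_j))^q when the denominator is nonzero and α_i := 0 otherwise, for exponent q ≥ 1. Then α_i = 0. -/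
/-! The detector's numerator is a sum of one-sided difference quotients of `f` at `xi`, taken
along `x j - xi` and along the opposite direction `-τ j • (x j - xi)`. For affine `f` the
difference quotient along `v` is `g v / ‖v‖`, which is odd in `v` and invariant under positive
rescaling, so each pair cancels and the numerator vanishes. -/

section

variable {E : Type*} [NormedAddCommGroup E] [NormedSpace ℝ E]
  {F : Type*} [FunLike F E ℝ] [LinearMapClass F ℝ E ℝ]

theorem map_div_norm_smul_of_pos (g : F) (v : E) {τ : ℝ} (hτ : 0 < τ) :
    g (τ • v) / ‖τ • v‖ = g v / ‖v‖ := by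
  rw [map_smul, norm_smul, Real.norm_of_nonneg hτ.le, smul_eq_mul, mul_div_mul_left _ _ hτ.ne']

theorem map_div_norm_add_map_neg_smul_div_norm_eq_zero (g : F) (v : E) {τ : ℝ} (hτ : 0 < τ) :
    g v / ‖v‖ + g (-(τ • v)) / ‖-(τ • v)‖ = 0 := by
  rw [map_neg, norm_neg, neg_div, map_div_norm_smul_of_pos g v hτ, add_neg_cancel]

end

open scoped Classical in
theorem shock_detector_linearity_preserving_general
    {E : Type*} [NormedAddCommGroup E] [NormedSpace ℝ E]
    {ι : Type*} (s : Finset ι)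
    (g : E →L[ℝ] ℝ) (cst : ℝ) (f : E → ℝ) (hf : ∀ x, f x = g x + cst)
    (xi : E) (x : ι → E)
    (τ : ι → ℝ) (hτ : ∀ j ∈ s, 0 < τ j)
    (xsym : ι → E) (hxsym : ∀ j ∈ s, xsym j = xi - τ j • (x j - xi))
    (q : ℕ) (hq : 1 ≤ q)
    (α : ℝ)
    (hα : α =
      if (∑ j ∈ s, (|f (x j) - f xi| / ‖x j - xi‖ + |f (xsym j) - f xi| / ‖xsym j - xi‖)) ≠ 0
      then (|∑ j ∈ s, ((f (x j) - f xi) / ‖x j - xi‖ + (f (xsym j) - f xi) / ‖xsym j - xi‖)| /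
            (∑ j ∈ s, (|f (x j) - f xi| / ‖x j - xi‖ + |f (xsym j) - f xi| / ‖xsym j - xi‖))) ^ q
      else 0) :
    α = 0 := by
  have hincr (y : E) : f y - f xi = g (y - xi) := by simp only [hf, map_sub]; ring
  have hjump : ∑ j ∈ s,
      ((f (x j) - f xi) / ‖x j - xi‖ + (f (xsym j) - f xi) / ‖xsym j - xi‖) = 0 := by
    refine Finset.sum_eq_zero fun j hj => ?_
    have hdir : xsym j - xi = -(τ j • (x j - xi)) := by rw [hxsym j hj]; abel
    rw [hincr, hincr, hdir]
    exact map_div_norm_add_map_neg_smul_div_norm_eq_zero g _ (hτ j hj)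
  rw [hα, hjump, abs_zero, zero_div, zero_pow (by omega), ite_self]

open scoped Classical in
/-- linearity preservation of the shock detector (Theorem 3.2).
If all control-point values come from an affine function, the shock detector
`α_i := (|Σ jumps| / Σ (2 means))^q` (set to 0 when the denominator vanishes)
is zero. -/
theorem shock_detector_linearity_preserving
    {E : Type*} [NormedAddCommGroup E] [NormedSpace ℝ E]
    {ι : Type*} (s : Finset ι)
    (g : E →L[ℝ] ℝ) (cst : ℝ) (f : E → ℝ) (hf : ∀ x, f x = g x + cst)
    (xi : E) (x : ι → E) (hx : ∀ j ∈ s, x j ≠ xi)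
    (τ : ι → ℝ) (hτ : ∀ j ∈ s, 0 < τ j)
    (xsym : ι → E) (hxsym : ∀ j ∈ s, xsym j = xi - τ j • (x j - xi))
    (q : ℕ) (hq : 1 ≤ q)
    (α : ℝ)
    (hα : α =
      if (∑ j ∈ s, (|f (x j) - f xi| / ‖x j - xi‖ + |f (xsym j) - f xi| / ‖xsym j - xi‖)) ≠ 0
      then (|∑ j ∈ s, ((f (x j) - f xi) / ‖x j - xi‖ + (f (xsym j) - f xi) / ‖xsym j - xi‖)| /
            (∑ j ∈ s, (|f (x j) - f xi| / ‖x j - xi‖ + |f (xsym j) - f xi| / ‖xsym j - xi‖))) ^ q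
      else 0) :
    α = 0 :=
  shock_detector_linearity_preserving_general s g cst f hf xi x τ hτ xsym hxsym q hq α hα
end

section
/- Let ε > 0 and γ > 0, and let (t_k) be a finite nonempty family of real numbers that all have the same sign (t_k ≤ 0 for all k, or t_k ≥ 0 for all k). Set J := Σ_k t_k. Then the regularized detector quotient satisfies (√(J² + ε) + γ) / (Σ_k t_k²/√(t_k² + ε) + γ) ≥ 1. Consequently, with Z defined by Z x = 2x⁴ − 5x³ + 3x² + x for x < 1 and Z x = 1 for x ≥ 1, the regularized shock detector Z((√(J² + ε) + γ)/(Σ_k t_k²/√(t_k² + ε) + γ))^q equals 1 for every exponent q. -/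
/-!
Each regularized term is bounded by the plain one, `t²/√(t² + ε) ≤ |t|`, so the denominator is
at most `Σ |t_k| + γ`. When all `t_k` share a sign there is no cancellation in `J`, so
`Σ |t_k| = |J| ≤ √(J² + ε)` and the quotient is at least `1`, where `Z` is constant `1`.
-/

open Finset

lemma abs_sum_eq_sum_abs_of_sign {ι G : Type*} [AddCommGroup G] [LinearOrder G]
    [IsOrderedAddMonoid G] {s : Finset ι} {t : ι → G}
    (hsign : (∀ k ∈ s, t k ≤ 0) ∨ (∀ k ∈ s, 0 ≤ t k)) :
    |∑ k ∈ s, t k| = ∑ k ∈ s, |t k| := by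
  rcases hsign with hnonpos | hnonneg
  · rw [← abs_neg, ← sum_neg_distrib, abs_sum_of_nonneg fun k hk => neg_nonneg.2 (hnonpos k hk)]
    exact sum_congr rfl fun k hk => (abs_of_nonpos (hnonpos k hk)).symm
  · rw [abs_sum_of_nonneg hnonneg]
    exact sum_congr rfl fun k hk => (abs_of_nonneg (hnonneg k hk)).symm

lemma sq_div_sqrt_sq_add_le_abs (x : ℝ) {ε : ℝ} (hε : 0 ≤ ε) :
    x ^ 2 / √(x ^ 2 + ε) ≤ |x| := by
  have habs : |x| ≤ √(x ^ 2 + ε) := Real.abs_le_sqrt (by linarith)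
  refine div_le_of_le_mul₀ (Real.sqrt_nonneg _) (abs_nonneg x) ?_
  calc x ^ 2 = |x| * |x| := by rw [← sq_abs, sq]
    _ ≤ |x| * √(x ^ 2 + ε) := mul_le_mul_of_nonneg_left habs (abs_nonneg x)

lemma sum_sq_div_sqrt_le_sqrt_sq_sum_add {ι : Type*} {s : Finset ι} {t : ι → ℝ} {ε : ℝ}
    (hε : 0 ≤ ε) (hsign : (∀ k ∈ s, t k ≤ 0) ∨ (∀ k ∈ s, 0 ≤ t k)) :
    ∑ k ∈ s, t k ^ 2 / √(t k ^ 2 + ε) ≤ √((∑ k ∈ s, t k) ^ 2 + ε) :=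
  calc ∑ k ∈ s, t k ^ 2 / √(t k ^ 2 + ε) ≤ ∑ k ∈ s, |t k| :=
        sum_le_sum fun k _ => sq_div_sqrt_sq_add_le_abs (t k) hε
    _ = |∑ k ∈ s, t k| := (abs_sum_eq_sum_abs_of_sign hsign).symm
    _ ≤ √((∑ k ∈ s, t k) ^ 2 + ε) := Real.abs_le_sqrt (by linarith)

theorem regularized_detector_equals_one_at_extrema_general
    {ι : Type*} (s : Finset ι)
    (ε γ : ℝ) (hε : 0 < ε) (hγ : 0 < γ)
    (t : ι → ℝ)
    (hsign : (∀ k ∈ s, t k ≤ 0) ∨ (∀ k ∈ s, 0 ≤ t k))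
    (J : ℝ) (hJ : J = ∑ k ∈ s, t k)
    (Z : ℝ → ℝ)
    (hZ : ∀ x : ℝ, Z x = if x < 1 then 2 * x ^ 4 - 5 * x ^ 3 + 3 * x ^ 2 + x else 1) :
    1 ≤ (Real.sqrt (J ^ 2 + ε) + γ) /
        ((∑ k ∈ s, (t k) ^ 2 / Real.sqrt ((t k) ^ 2 + ε)) + γ) ∧
    ∀ q : ℕ,
      (Z ((Real.sqrt (J ^ 2 + ε) + γ) /
        ((∑ k ∈ s, (t k) ^ 2 / Real.sqrt ((t k) ^ 2 + ε)) + γ))) ^ q = 1 := by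
  have hD_nonneg : 0 ≤ ∑ k ∈ s, t k ^ 2 / √(t k ^ 2 + ε) :=
    sum_nonneg fun k _ => by positivity
  have hD_le : ∑ k ∈ s, t k ^ 2 / √(t k ^ 2 + ε) ≤ √(J ^ 2 + ε) :=
    hJ ▸ sum_sq_div_sqrt_le_sqrt_sq_sum_add hε.le hsign
  have hquot : 1 ≤ (√(J ^ 2 + ε) + γ) / (∑ k ∈ s, t k ^ 2 / √(t k ^ 2 + ε) + γ) :=
    (one_le_div₀ (by linarith)).2 (by linarith)
  refine ⟨hquot, fun q => ?_⟩
  rw [hZ, if_neg (not_lt.2 hquot), one_pow]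

/-- at a local discrete extremum all jump terms `t k` share a sign, so
the regularized detector quotient is at least 1 and the regularized shock detector
`(Z quotient)^q` equals 1 for every exponent `q`. -/
theorem regularized_detector_equals_one_at_extrema
    {ι : Type*} (s : Finset ι) (hs : s.Nonempty)
    (ε γ : ℝ) (hε : 0 < ε) (hγ : 0 < γ)
    (t : ι → ℝ)
    (hsign : (∀ k ∈ s, t k ≤ 0) ∨ (∀ k ∈ s, 0 ≤ t k))
    (J : ℝ) (hJ : J = ∑ k ∈ s, t k)
    (Z : ℝ → ℝ)
    (hZ : ∀ x : ℝ, Z x = if x < 1 then 2 * x ^ 4 - 5 * x ^ 3 + 3 * x ^ 2 + x else 1) :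
    1 ≤ (Real.sqrt (J ^ 2 + ε) + γ) /
        ((∑ k ∈ s, (t k) ^ 2 / Real.sqrt ((t k) ^ 2 + ε)) + γ) ∧
    ∀ q : ℕ,
      (Z ((Real.sqrt (J ^ 2 + ε) + γ) /
        ((∑ k ∈ s, (t k) ^ 2 / Real.sqrt ((t k) ^ 2 + ε)) + γ))) ^ q = 1 :=
  regularized_detector_equals_one_at_extrema_general s ε γ hε hγ t hsign J hJ Z hZ
end
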